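/- arXiv:math/0505630 — 5 statements merged into one kernel-verified Lean document; each statement's English description precedes it below -/
import Mathlib

section
/- A Weyr matrix of a single eigenvalue $\lambda$ is obtained from the corresponding Jordan matrix $J(\lambda) = \bigoplus_{j} J_j(\lambda)^{e_j}$ by conjugation by a permutation matrix, i.e. there is a permutation matrix $P$ with $W_\lambda = P^{-1} J(\lambda) P$. -/
open Finset

open scoped Classical in
/-- `W` is a Weyr matrix with single eigenvalue `lam`, with `d` diagonal blocks of
sizes `m 0 ≥ m 1 ≥ ⋯ ≥ m (d-1) > 0`: the diagonal blocks are `lam • I`, and the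
superdiagonal block from block `j` to block `j+1` is `(I_{m (j+1)}; 0)`. -/
def IsSingleWeyrData {k : Type*} [Field k] {n : ℕ} (lam : k) (d : ℕ) (m : ℕ → ℕ)
    (W : Matrix (Fin n) (Fin n) k) : Prop :=
  (∀ j < d, 0 < m j) ∧
  (∀ i j, i ≤ j → j < d → m j ≤ m i) ∧
  (∑ i ∈ Finset.range d, m i = n) ∧
  (∀ r c : Fin n, W r c =
    if (r : ℕ) = (c : ℕ) then lam
    else if ∃ j, j + 1 < d ∧ ∃ p, p < m (j + 1) ∧
        (r : ℕ) = (∑ i ∈ Finset.range j, m i) + p ∧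
        (c : ℕ) = (∑ i ∈ Finset.range (j + 1), m i) + p
      then 1 else 0)

/-- The `d × d` upper triangular Jordan block with eigenvalue `lam`. -/
def jordanBlock {k : Type*} [Zero k] [One k] (d : ℕ) (lam : k) :
    Matrix (Fin d) (Fin d) k :=
  Matrix.of fun i j => if (i : ℕ) = (j : ℕ) then lam
    else if (i : ℕ) + 1 = (j : ℕ) then 1 else 0

/-!
Index the Jordan basis by triples `(i, q, a)`: the `a`-th vector of the `q`-th Jordan block
of size `i + 1`. Send it to Weyr block `a`, at offset `m (i + 1) + q`. Within a Weyr block,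
the Jordan blocks are thus listed by decreasing size, so the `a`-th vectors of the Jordan
blocks of size `> a + 1` occupy the first `m (a + 1)` slots of block `a`. The Jordan
superdiagonal `(i, q, a) ↦ (i, q, a + 1)` therefore becomes exactly the map from slot `p` of
block `a` to slot `p` of block `a + 1`, which is the identity block `(I; 0)` of `W`.
Both matrices are `lam` on the diagonal and vanish elsewhere, so the bijection conjugates
one into the other.
-/

section WeyrCoordinates

variable (d : ℕ) (e : ℕ → ℕ)

def weyrSize (j : ℕ) : ℕ := ∑ i ∈ Ico j d, e i

def weyrStart (j : ℕ) : ℕ := ∑ i ∈ range j, weyrSize d e i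

variable {d e}

lemma weyrSize_antitone : Antitone (weyrSize d e) :=
  fun _ _ h => sum_le_sum_of_subset (Ico_subset_Ico h le_rfl)

lemma weyrSize_eq_succ_add {i : ℕ} (hi : i < d) :
    weyrSize d e i = weyrSize d e (i + 1) + e i := by
  rw [weyrSize, sum_eq_sum_Ico_succ_bot hi, add_comm, weyrSize]

lemma weyrStart_succ (j : ℕ) : weyrStart d e (j + 1) = weyrStart d e j + weyrSize d e j :=
  sum_range_succ _ _

lemma weyrStart_mono : Monotone (weyrStart d e) :=
  monotone_nat_of_le_succ fun j => by rw [weyrStart_succ]; omega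

lemma sum_range_weyrSize : ∑ j ∈ range d, weyrSize d e j = ∑ j ∈ range d, (j + 1) * e j := by
  simp only [weyrSize, range_eq_Ico, sum_Ico_Ico_comm 0 d fun _ j => e j, sum_const, Nat.card_Ico,
    smul_eq_mul, Nat.sub_zero]

lemma weyrStart_add_inj {a b t s : ℕ} (ht : t < weyrSize d e a) (hs : s < weyrSize d e b)
    (h : weyrStart d e a + t = weyrStart d e b + s) : a = b ∧ t = s := by
  have hdisj := (weyrStart_mono (d := d) (e := e)).pairwise_disjoint_on_Ico_succ.set_pairwise .univ
  have hab : a = b := Set.PairwiseDisjoint.elim_set hdisj trivial trivial (weyrStart d e a + t)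
      (by simp only [Set.mem_Ico, Order.succ_eq_add_one, weyrStart_succ]; omega)
      (by simp only [Set.mem_Ico, Order.succ_eq_add_one, weyrStart_succ]; omega)
  subst hab
  exact ⟨rfl, by omega⟩

lemma weyrSize_succ_add_inj {i i' q q' : ℕ} (hi : i < d) (hi' : i' < d)
    (hq : q < e i) (hq' : q' < e i')
    (h : weyrSize d e (i + 1) + q = weyrSize d e (i' + 1) + q') : i = i' ∧ q = q' := by
  have hdisj := (weyrSize_antitone (d := d) (e := e)).pairwise_disjoint_on_Ico_succ.set_pairwise .univ
  have hii' : i = i' := Set.PairwiseDisjoint.elim_set hdisj trivial trivial (weyrSize d e (i + 1) + q)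
      (by simp only [Set.mem_Ico, Order.succ_eq_add_one, weyrSize_eq_succ_add hi]; omega)
      (by simp only [Set.mem_Ico, Order.succ_eq_add_one, weyrSize_eq_succ_add hi']; omega)
  subst hii'
  exact ⟨rfl, by omega⟩

end WeyrCoordinates

abbrev JordanIndex (d : ℕ) (e : ℕ → ℕ) : Type :=
  (p : (j : Fin d) × Fin (e (j : ℕ))) × Fin ((p.1 : ℕ) + 1)

namespace JordanIndex

variable {d : ℕ} {e : ℕ → ℕ}

def weyrOffset (x : JordanIndex d e) : ℕ := weyrSize d e (x.1.1 + 1) + x.1.2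

def weyrPos (x : JordanIndex d e) : ℕ := weyrStart d e x.2 + x.weyrOffset

lemma weyrOffset_lt_weyrSize (x : JordanIndex d e) : x.weyrOffset < weyrSize d e x.2 := by
  obtain ⟨⟨i, q⟩, a⟩ := x
  have hsize := weyrSize_eq_succ_add (e := e) i.isLt
  have ha : (a : ℕ) < i + 1 := a.isLt
  have hanti := weyrSize_antitone (d := d) (e := e) (Nat.le_of_lt_succ ha)
  show weyrSize d e (i + 1) + q < weyrSize d e a
  omega

lemma weyrOffset_eq_iff {x y : JordanIndex d e} : x.weyrOffset = y.weyrOffset ↔ x.1 = y.1 := by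
  obtain ⟨⟨i, q⟩, a⟩ := x
  obtain ⟨⟨i', q'⟩, b⟩ := y
  refine ⟨fun h => ?_, fun h => by cases h; rfl⟩
  obtain ⟨hi, hq⟩ := weyrSize_succ_add_inj i.isLt i'.isLt q.isLt q'.isLt h
  obtain rfl : i = i' := Fin.ext hi
  obtain rfl : q = q' := Fin.ext hq
  rfl

lemma snd_lt (x : JordanIndex d e) : (x.2 : ℕ) < d :=
  x.2.isLt.trans_le x.1.1.isLt

lemma weyrPos_lt_weyrStart (x : JordanIndex d e) : x.weyrPos < weyrStart d e d := by
  have hmono := weyrStart_mono (d := d) (e := e) x.snd_lt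
  have := x.weyrOffset_lt_weyrSize
  rw [weyrStart_succ] at hmono
  simp only [weyrPos]
  omega

lemma weyrPos_eq_iff {x y : JordanIndex d e} :
    x.weyrPos = y.weyrPos ↔ x.1 = y.1 ∧ (x.2 : ℕ) = y.2 := by
  constructor
  · intro h
    obtain ⟨hblock, hoffset⟩ :=
      weyrStart_add_inj x.weyrOffset_lt_weyrSize y.weyrOffset_lt_weyrSize h
    exact ⟨weyrOffset_eq_iff.1 hoffset, hblock⟩
  · rintro ⟨hp, ha⟩
    simp only [weyrPos, ha, weyrOffset_eq_iff.2 hp]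

lemma weyrPos_injective : Function.Injective (weyrPos (d := d) (e := e)) := by
  rintro ⟨p, a⟩ ⟨p', b⟩ h
  obtain ⟨rfl, hab⟩ := weyrPos_eq_iff.1 h
  obtain rfl : a = b := Fin.ext hab
  rfl

lemma weyrPos_superdiagonal_iff {x y : JordanIndex d e} :
    (∃ j, j + 1 < d ∧ ∃ p, p < weyrSize d e (j + 1) ∧
        x.weyrPos = weyrStart d e j + p ∧ y.weyrPos = weyrStart d e (j + 1) + p) ↔
      x.1 = y.1 ∧ (x.2 : ℕ) + 1 = y.2 := by
  constructor
  · rintro ⟨j, -, p, hp, hx, hy⟩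
    have hpj : p < weyrSize d e j := hp.trans_le (weyrSize_antitone j.le_succ)
    obtain ⟨rfl, rfl⟩ := weyrStart_add_inj x.weyrOffset_lt_weyrSize hpj hx
    obtain ⟨hb, hoffset⟩ := weyrStart_add_inj y.weyrOffset_lt_weyrSize hp hy
    exact ⟨weyrOffset_eq_iff.1 hoffset.symm, hb.symm⟩
  · rintro ⟨hp, hab⟩
    have hoffset := weyrOffset_eq_iff.2 hp
    refine ⟨x.2, hab ▸ y.snd_lt, x.weyrOffset, hoffset ▸ hab ▸ y.weyrOffset_lt_weyrSize, rfl, ?_⟩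
    simp only [weyrPos, hab, weyrOffset_eq_iff.2 hp]

lemma card_eq_sum : Fintype.card (JordanIndex d e) = ∑ j ∈ range d, (j + 1) * e j := by
  simp only [Fintype.card_sigma, Fintype.card_fin, Fintype.sum_sigma, sum_const, card_univ,
    smul_eq_mul]
  rw [← Fin.sum_univ_eq_sum_range fun j => (j + 1) * e j]
  exact sum_congr rfl fun j _ => mul_comm _ _

end JordanIndex

lemma blockDiagonal'_jordanBlock_apply {k : Type*} [Zero k] [One k] {d : ℕ} {e : ℕ → ℕ}
    (lam : k) (x y : JordanIndex d e) :
    Matrix.blockDiagonal' (fun p : (j : Fin d) × Fin (e j) => jordanBlock ((p.1 : ℕ) + 1) lam)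
        x y =
      if x.1 = y.1 ∧ (x.2 : ℕ) = y.2 then lam
      else if x.1 = y.1 ∧ (x.2 : ℕ) + 1 = y.2 then 1 else 0 := by
  obtain ⟨p, a⟩ := x
  obtain ⟨p', b⟩ := y
  by_cases hp : p = p'
  · subst hp
    simp [Matrix.blockDiagonal'_apply_eq, jordanBlock]
  · simp [Matrix.blockDiagonal'_apply_ne _ _ _ hp, hp]

theorem stmt2_general {k : Type*} [Field k] (lam : k) (d : ℕ) (e : ℕ → ℕ) (n : ℕ)
    (W : Matrix (Fin n) (Fin n) k)
    (hW : IsSingleWeyrData lam d (fun j => ∑ i ∈ Finset.Ico j d, e i) W) :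
    ∃ σ : Fin n ≃ ((p : (j : Fin d) × Fin (e (j : ℕ))) × Fin ((p.1 : ℕ) + 1)),
      ∀ r c : Fin n,
        W r c = Matrix.blockDiagonal'
          (fun p : (j : Fin d) × Fin (e (j : ℕ)) => jordanBlock ((p.1 : ℕ) + 1) lam)
          (σ r) (σ c) := by
  classical
  obtain ⟨-, -, hsum, hentry⟩ := hW
  change weyrStart d e d = n at hsum
  let g : JordanIndex d e → Fin n := fun x => ⟨x.weyrPos, hsum ▸ x.weyrPos_lt_weyrStart⟩
  have hcard : Fintype.card (JordanIndex d e) = Fintype.card (Fin n) := by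
    rw [JordanIndex.card_eq_sum, ← sum_range_weyrSize, Fintype.card_fin, ← hsum, weyrStart]
  have hg : Function.Bijective g := (Fintype.bijective_iff_injective_and_card g).2
    ⟨fun x y h => JordanIndex.weyrPos_injective (congrArg Fin.val h), hcard⟩
  refine ⟨(Equiv.ofBijective g hg).symm, fun r c => ?_⟩
  obtain ⟨x, rfl⟩ := hg.surjective r
  obtain ⟨y, rfl⟩ := hg.surjective c
  rw [Equiv.ofBijective_symm_apply_apply, Equiv.ofBijective_symm_apply_apply, hentry,
    blockDiagonal'_jordanBlock_apply]
  exact if_congr JordanIndex.weyrPos_eq_iff rfl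
    (if_congr JordanIndex.weyrPos_superdiagonal_iff rfl rfl)

/-- **Lemma 2.5.1.** A Weyr matrix of a single eigenvalue `lam`, with block sizes
`m j = e j + e (j+1) + ⋯ + e (d-1)` (where `e j` is the number of Jordan blocks of
size `j+1`), is obtained from the Jordan matrix `J(lam) = ⊕_j J_{j+1}(lam)^{e j}`
by simultaneously permuting rows and columns, i.e. by conjugation with a
permutation matrix (here: a bijection of the index sets). -/
theorem stmt2 {k : Type*} [Field k] (lam : k) (d : ℕ) (e : ℕ → ℕ) (n : ℕ)
    (hn : n = ∑ j ∈ Finset.range d, (j + 1) * e j)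
    (W : Matrix (Fin n) (Fin n) k)
    (hW : IsSingleWeyrData lam d (fun j => ∑ i ∈ Finset.Ico j d, e i) W) :
    ∃ σ : Fin n ≃ ((p : (j : Fin d) × Fin (e (j : ℕ))) × Fin ((p.1 : ℕ) + 1)),
      ∀ r c : Fin n,
        W r c = Matrix.blockDiagonal'
          (fun p : (j : Fin d) × Fin (e (j : ℕ)) => jordanBlock ((p.1 : ℕ) + 1) lam)
          (σ r) (σ c) :=
  stmt2_general lam d e n W hW
end

section
/- Let $W$ be a Weyr matrix of a single eigenvalue $\lambda$ with diagonal block sizes $m_1 \geq m_2 \geq \cdots \geq m_d$. Then any matrix $X$ commuting with $W$ is block upper triangular with respect to the partition $(m_1, \dots, m_d)$: writing $X = (X_{ij})_{d \times d}$ with $X_{ij}$ of size $m_i \times m_j$, one has $X_{ij} = 0$ for $i > j$. -/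
/-!
Write `W = λ • 1 + N`, where `N` is the nilpotent part. Then `X` commutes with `N`, and comparing
the entries of `X * N` and `N * X` gives two facts: `X` vanishes in block-column `0` below the
first block-row (no column of `N` in block `0` is nonzero), and each entry of `X` in block
position `(i + 1, j + 1)` equals the entry at the same offsets in block position `(i, j)`.
Induction on `j` then kills every block below the diagonal.
-/

open Finset

section Blocks

variable {m : ℕ → ℕ}

def blockStart (m : ℕ → ℕ) (a : ℕ) : ℕ := ∑ i ∈ range a, m i

lemma blockStart_succ (a : ℕ) : blockStart m (a + 1) = blockStart m a + m a :=
  sum_range_succ m a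

lemma blockStart_mono : Monotone (blockStart m) :=
  (sum_mono_set m).comp range_mono

lemma blockStart_add_lt {a b p : ℕ} (hab : a < b) (hp : p < m a) :
    blockStart m a + p < blockStart m b := by
  have := blockStart_mono (m := m) (Nat.succ_le_of_lt hab)
  rw [blockStart_succ] at this
  omega

lemma blockStart_add_inj {a b p q : ℕ} (hp : p < m a) (hq : q < m b)
    (h : blockStart m a + p = blockStart m b + q) : a = b ∧ p = q := by
  rcases lt_trichotomy a b with hab | rfl | hab
  · have := blockStart_add_lt hab hp
    omega
  · omega
  · have := blockStart_add_lt hab hq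
    omega

end Blocks

section Shift

variable {d : ℕ} {m : ℕ → ℕ}

/-- The support of the superdiagonal blocks `(I; 0)` in `IsSingleWeyrData`. -/
def IsWeyrShift (d : ℕ) (m : ℕ → ℕ) (r c : ℕ) : Prop :=
  ∃ j, j + 1 < d ∧ ∃ p, p < m (j + 1) ∧ r = blockStart m j + p ∧ c = blockStart m (j + 1) + p

lemma IsWeyrShift.lt (hm : ∀ j, j + 1 < d → m (j + 1) ≤ m j) {r c : ℕ}
    (h : IsWeyrShift d m r c) : r < c := by
  obtain ⟨j, hj, p, hp, rfl, rfl⟩ := h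
  exact blockStart_add_lt (Nat.lt_succ_self j) (hp.trans_le (hm j hj)) |>.trans_le
    (Nat.le_add_right _ _)

lemma IsWeyrShift.left_unique {x x' c : ℕ} (h : IsWeyrShift d m x c)
    (h' : IsWeyrShift d m x' c) : x = x' := by
  obtain ⟨j, -, p, hp, rfl, hc⟩ := h
  obtain ⟨j', -, p', hp', rfl, hc'⟩ := h'
  obtain ⟨hjj, rfl⟩ := blockStart_add_inj hp hp' (hc.symm.trans hc')
  obtain rfl : j = j' := Nat.succ_injective hjj
  rfl

lemma IsWeyrShift.right_unique (hm : ∀ j, j + 1 < d → m (j + 1) ≤ m j) {r x x' : ℕ}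
    (h : IsWeyrShift d m r x) (h' : IsWeyrShift d m r x') : x = x' := by
  obtain ⟨j, hj, p, hp, hr, rfl⟩ := h
  obtain ⟨j', hj', p', hp', hr', rfl⟩ := h'
  obtain ⟨rfl, rfl⟩ :=
    blockStart_add_inj (hp.trans_le (hm j hj)) (hp'.trans_le (hm j' hj')) (hr.symm.trans hr')
  rfl

lemma not_isWeyrShift_of_lt {x c : ℕ} (hc : c < m 0) : ¬ IsWeyrShift d m x c := by
  rintro ⟨j, -, p, -, -, rfl⟩
  have h1 : blockStart m 1 = m 0 := by simp [blockStart]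
  have h2 : blockStart m 1 ≤ blockStart m (j + 1) := blockStart_mono (by omega)
  omega

end Shift

section NilpotentPart

variable {R : Type*} [Semiring R] {n d : ℕ} {m : ℕ → ℕ}

open scoped Classical in
variable (R n) in
noncomputable def weyrNilpotent (d : ℕ) (m : ℕ → ℕ) : Matrix (Fin n) (Fin n) R :=
  Matrix.of fun r c => if IsWeyrShift d m r c then 1 else 0

lemma mul_weyrNilpotent_apply_of_isWeyrShift (X : Matrix (Fin n) (Fin n) R) {r c x : Fin n}
    (h : IsWeyrShift d m x c) : (X * weyrNilpotent R n d m) r c = X r x := by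
  classical
  rw [Matrix.mul_apply, sum_eq_single x]
  · simp [weyrNilpotent, h]
  · intro y _ hyx
    have : ¬ IsWeyrShift d m y c := fun hy => hyx (Fin.ext (hy.left_unique h))
    simp [weyrNilpotent, this]
  · simp

lemma mul_weyrNilpotent_apply_of_lt (X : Matrix (Fin n) (Fin n) R) (r : Fin n) {c : Fin n}
    (hc : (c : ℕ) < m 0) : (X * weyrNilpotent R n d m) r c = 0 := by
  classical
  simp [Matrix.mul_apply, weyrNilpotent, not_isWeyrShift_of_lt hc]

lemma weyrNilpotent_mul_apply_of_isWeyrShift (hm : ∀ j, j + 1 < d → m (j + 1) ≤ m j)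
    (X : Matrix (Fin n) (Fin n) R) {r c x : Fin n} (h : IsWeyrShift d m r x) :
    (weyrNilpotent R n d m * X) r c = X x c := by
  classical
  rw [Matrix.mul_apply, sum_eq_single x]
  · simp [weyrNilpotent, h]
  · intro y _ hyx
    have : ¬ IsWeyrShift d m r y := fun hy => hyx (Fin.ext (hy.right_unique hm h))
    simp [weyrNilpotent, this]
  · simp

end NilpotentPart

section Commuting

variable {R : Type*} [Semiring R] {n d : ℕ} {m : ℕ → ℕ}

lemma exists_isWeyrShift_of_eq (hm : ∀ j, j + 1 < d → m (j + 1) ≤ m j) {i q : ℕ}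
    (hi : i + 1 < d) (hq : q < m (i + 1)) {r : Fin n} (hr : (r : ℕ) = blockStart m (i + 1) + q) :
    ∃ r' : Fin n, (r' : ℕ) = blockStart m i + q ∧ IsWeyrShift d m r' r :=
  have hshift : IsWeyrShift d m (blockStart m i + q) r := ⟨i, hi, q, hq, rfl, hr⟩
  ⟨⟨_, (hshift.lt hm).trans r.isLt⟩, rfl, hshift⟩

variable {X : Matrix (Fin n) (Fin n) R} (hX : Commute X (weyrNilpotent R n d m))
  (hm : ∀ j, j + 1 < d → m (j + 1) ≤ m j)
include hX hm

lemma apply_eq_apply_of_commute_weyrNilpotent {r r' c c' : Fin n}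
    (hr : IsWeyrShift d m r' r) (hc : IsWeyrShift d m c' c) : X r c = X r' c' := by
  rw [← weyrNilpotent_mul_apply_of_isWeyrShift hm X hr, ← hX.eq,
    mul_weyrNilpotent_apply_of_isWeyrShift X hc]

lemma apply_eq_zero_of_commute_weyrNilpotent_of_lt {r r' c : Fin n}
    (hr : IsWeyrShift d m r' r) (hc : (c : ℕ) < m 0) : X r c = 0 := by
  rw [← weyrNilpotent_mul_apply_of_isWeyrShift hm X hr, ← hX.eq,
    mul_weyrNilpotent_apply_of_lt X r' hc]

lemma apply_eq_zero_of_commute_weyrNilpotent {i j q p : ℕ} (hji : j < i) (hid : i < d)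
    (hq : q < m i) (hp : p < m j) {r c : Fin n} (hr : (r : ℕ) = blockStart m i + q)
    (hc : (c : ℕ) = blockStart m j + p) : X r c = 0 := by
  induction j generalizing i q p r c with
  | zero =>
    obtain ⟨i, rfl⟩ := Nat.exists_eq_add_one.2 hji
    obtain ⟨r', -, hr'⟩ := exists_isWeyrShift_of_eq hm hid hq hr
    refine apply_eq_zero_of_commute_weyrNilpotent_of_lt hX hm hr' ?_
    simpa [hc, blockStart] using hp
  | succ j ih =>
    obtain ⟨i, rfl⟩ := Nat.exists_eq_add_one.2 (j.succ_pos.trans hji)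
    obtain ⟨r', hr'q, hr'⟩ := exists_isWeyrShift_of_eq hm hid hq hr
    obtain ⟨c', hc'p, hc'⟩ := exists_isWeyrShift_of_eq hm (hji.trans hid) hp hc
    rw [apply_eq_apply_of_commute_weyrNilpotent hX hm hr' hc']
    exact ih (by omega) (by omega) (hq.trans_le (hm i hid))
      (hp.trans_le (hm j (by omega))) hr'q hc'p

end Commuting

section Weyr

variable {k : Type*} [Field k] {n d : ℕ} {m : ℕ → ℕ} {lam : k} {W : Matrix (Fin n) (Fin n) k}

lemma IsSingleWeyrData.succ_le (hW : IsSingleWeyrData lam d m W) (j : ℕ) (hj : j + 1 < d) :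
    m (j + 1) ≤ m j :=
  hW.2.1 j (j + 1) j.le_succ hj

lemma IsSingleWeyrData.eq_smul_one_add (hW : IsSingleWeyrData lam d m W) :
    W = lam • 1 + weyrNilpotent k n d m := by
  classical
  ext r c
  rw [hW.2.2.2 r c]
  change (if (r : ℕ) = c then lam else if IsWeyrShift d m r c then (1 : k) else 0) =
    (lam • 1 : Matrix (Fin n) (Fin n) k) r c + if IsWeyrShift d m r c then 1 else 0
  by_cases hrc : r = c
  · subst hrc
    have : ¬ IsWeyrShift d m r r := fun h => lt_irrefl _ (h.lt hW.succ_le)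
    simp [this]
  · simp [hrc, Fin.val_eq_val]

lemma IsSingleWeyrData.commute_weyrNilpotent (hW : IsSingleWeyrData lam d m W)
    {X : Matrix (Fin n) (Fin n) k} (hX : Commute X W) : Commute X (weyrNilpotent k n d m) := by
  have := hX.sub_right ((Commute.one_right X).smul_right lam)
  rwa [hW.eq_smul_one_add, add_sub_cancel_left] at this

end Weyr

/-- **(2.5).** Any matrix `X` commuting with a single-eigenvalue Weyr matrix `W`
with block sizes `m 0 ≥ ⋯ ≥ m (d-1)` is block upper triangular: the block of `X`
in block-row `i` and block-column `j` vanishes whenever `i > j`. -/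
theorem stmt7 {k : Type*} [Field k] {n : ℕ} (lam : k) (d : ℕ) (m : ℕ → ℕ)
    (W : Matrix (Fin n) (Fin n) k) (hW : IsSingleWeyrData lam d m W)
    (X : Matrix (Fin n) (Fin n) k) (hX : X * W = W * X) :
    ∀ i j : ℕ, i < d → j < d → j < i →
      ∀ r c : Fin n,
        (∑ l ∈ Finset.range i, m l) ≤ (r : ℕ) →
        (r : ℕ) < ∑ l ∈ Finset.range (i + 1), m l →
        (∑ l ∈ Finset.range j, m l) ≤ (c : ℕ) →
        (c : ℕ) < ∑ l ∈ Finset.range (j + 1), m l →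
        X r c = 0 := by
  intro i j hid _ hji r c hr₀ hr₁ hc₀ hc₁
  rw [← blockStart] at hr₀ hr₁ hc₀ hc₁
  rw [blockStart_succ] at hr₁ hc₁
  exact apply_eq_zero_of_commute_weyrNilpotent (hW.commute_weyrNilpotent hX) hW.succ_le hji hid
    (q := r - blockStart m i) (p := c - blockStart m j) (by omega) (by omega) (by omega) (by omega)
end

section
/- Let $q_1(\lambda),\dots,q_m(\lambda) \in k[\lambda]$ be polynomials that generate the unit ideal, i.e. there exist polynomials $s_1,\dots,s_m \in k[\lambda]$ with $\sum_{j=1}^m s_j(\lambda) q_j(\lambda) = 1$. Then there exists an invertible matrix $Q \in \mathrm{GL}_m(k[\lambda])$ whose first row is $(q_1,\dots,q_m)$. -/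
/-- **(4.3, Hermite ring property of `k[λ]`).** Every unimodular row
`(q₁, …, q_m)` over the polynomial ring `k[λ]` (i.e. the `q_j` generate the
unit ideal) can be completed to an invertible matrix `Q ∈ GL_m(k[λ])` having
`(q₁, …, q_m)` as its first row. -/
theorem stmt11 {k : Type*} [Field k] (m : ℕ) (hm : 0 < m)
    (q : Fin m → Polynomial k)
    (hq : Ideal.span (Set.range q) = ⊤) :
    ∃ Q : Matrix (Fin m) (Fin m) (Polynomial k),
      IsUnit Q ∧ ∀ j, Q ⟨0, hm⟩ j = q j := by
  -- obtain Bezout coefficients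
  have h1 : (1 : (Polynomial k)) ∈ Ideal.span (Set.range q) := by rw [hq]; trivial
  obtain ⟨s, hs⟩ := (Submodule.mem_span_range_iff_exists_fun (Polynomial k)).mp h1
  simp only [smul_eq_mul] at hs
  -- the linear functional ψ x = ∑ s i * x i
  let ψ : (Fin m → (Polynomial k)) →ₗ[(Polynomial k)] (Polynomial k) :=
    { toFun := fun x => ∑ i, s i * x i
      map_add' := fun x y => by simp [mul_add, Finset.sum_add_distrib]
      map_smul' := fun c x => by simp [Finset.mul_sum, mul_left_comm] }
  have hψq : ψ q = 1 := hs
  let K := LinearMap.ker ψ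
  -- the equivalence K × (Polynomial k) ≃ₗ Fin m → (Polynomial k), (y, c) ↦ y + c • q
  let f : (K × (Polynomial k)) →ₗ[(Polynomial k)] (Fin m → (Polynomial k)) :=
    (K.subtype).coprod (LinearMap.toSpanSingleton (Polynomial k) _ q)
  have hf : Function.Bijective f := by
    constructor
    · intro ⟨y, c⟩ ⟨y', c'⟩ h
      simp only [f, LinearMap.coprod_apply, Submodule.coe_subtype,
        LinearMap.toSpanSingleton_apply] at h
      have hc : c = c' := by
        have := congrArg ψ h
        simpa [map_add, map_smul, y.2.out, (y'.2 : ψ y' = 0), hψq] using this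
      have hy : (y : Fin m → (Polynomial k)) = (y' : Fin m → (Polynomial k)) := by
        rw [hc] at h
        exact add_right_cancel h
      exact Prod.ext (Subtype.ext hy) hc
    · intro x
      refine ⟨⟨⟨x - ψ x • q, ?_⟩, ψ x⟩, ?_⟩
      · simp [K, LinearMap.mem_ker, map_sub, map_smul, hψq]
      · simp [f, LinearMap.toSpanSingleton_apply]
  let e : (K × (Polynomial k)) ≃ₗ[(Polynomial k)] (Fin m → (Polynomial k)) := LinearEquiv.ofBijective f hf
  -- bases
  obtain ⟨n, bK⟩ := Submodule.basisOfPid (Pi.basisFun (Polynomial k) (Fin m)) K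
  let b : Module.Basis (Fin n ⊕ Unit) (Polynomial k) (Fin m → (Polynomial k)) :=
    (bK.prod (Module.Basis.singleton Unit (Polynomial k))).map e
  -- cardinality: m = n + 1
  have hcard : m = n + 1 := by
    have h1 : Module.finrank (Polynomial k) (Fin m → (Polynomial k)) = m := by simp
    have h2 : Module.finrank (Polynomial k) (Fin m → (Polynomial k)) = n + 1 := by
      rw [Module.finrank_eq_card_basis b]
      simp
    omega
  subst hcard
  -- reindex by Fin (n+1), sending 0 to inr ()
  let g : Fin (n + 1) ≃ (Fin n ⊕ Unit) :=
    (finSuccEquiv n).trans ((Equiv.optionEquivSumPUnit (Fin n) : Option (Fin n) ≃ Fin n ⊕ Unit))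
  let b' : Module.Basis (Fin (n + 1)) (Polynomial k) (Fin (n + 1) → (Polynomial k)) := b.reindex g.symm
  have hb'0 : b' ⟨0, hm⟩ = q := by
    have : b' ⟨0, hm⟩ = b (g 0) := by
      simp [b', Module.Basis.reindex_apply]
    rw [this]
    have hg0 : g 0 = Sum.inr () := by
      simp [g, finSuccEquiv_zero]
    rw [hg0]
    simp only [b, Module.Basis.map_apply, Module.Basis.prod_apply, Sum.elim_inr]
    simp only [e, LinearEquiv.ofBijective_apply, f]
    simp [LinearMap.toSpanSingleton_apply, Module.Basis.singleton_apply]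
  -- the matrix
  refine ⟨((Pi.basisFun (Polynomial k) (Fin (n + 1))).toMatrix ⇑b').transpose, ?_, ?_⟩
  · have : Invertible ((Pi.basisFun (Polynomial k) (Fin (n + 1))).toMatrix ⇑b') :=
      (Pi.basisFun (Polynomial k) (Fin (n + 1))).invertibleToMatrix b'
    have hu : IsUnit ((Pi.basisFun (Polynomial k) (Fin (n + 1))).toMatrix ⇑b') :=
      isUnit_of_invertible _
    rw [Matrix.isUnit_iff_isUnit_det] at hu ⊢
    rwa [Matrix.det_transpose]
  · intro j
    rw [Matrix.transpose_apply, Module.Basis.toMatrix_apply, Pi.basisFun_repr, hb'0]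
end

section
/- Let $\varphi$ be a block upper triangular idempotent matrix over an algebraically closed field $k$ (partitioned into blocks of sizes $n_1,\dots,n_t$). Then there exists an invertible block upper triangular matrix $\chi$ (with the same partition) such that $\chi^{-1}\varphi\chi$ is block diagonal with each diagonal block of the form $\begin{pmatrix} I_{d_l} & 0 \\ 0 & 0 \end{pmatrix}$ for some $0 \le d_l \le n_l$. -/
/-!
An idempotent matrix over a field is similar to `diag(I_d, 0)`: take a basis adapted to the
decomposition into its range and kernel. Doing this for each diagonal block of `φ` gives a block
diagonal `g` with `φ_ll g_l = g_l e_ll`, where `e` is the target normal form. For idempotents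
`p`, `q` the element `u = p g q + (1 - p) g (1 - q)` always satisfies `p u = u q`. When `p` and `q`
are block upper triangular, so is `u`, and its diagonal blocks are `g_l`; hence `u` is invertible
and conjugates `φ` to `e`.
-/

open Matrix

section Ring

variable {R : Type*} [Ring R] {p q : R}

theorem IsIdempotentElem.mul_intertwiner (hp : IsIdempotentElem p) (hq : IsIdempotentElem q)
    (g : R) :
    p * (p * g * q + (1 - p) * g * (1 - q)) = (p * g * q + (1 - p) * g * (1 - q)) * q := by
  have hp' : p * (1 - p) = 0 := by rw [mul_sub, mul_one, hp.eq, sub_self]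
  have hq' : (1 - q) * q = 0 := by rw [sub_mul, one_mul, hq.eq, sub_self]
  rw [mul_add, add_mul, mul_assoc _ q q, hq.eq, mul_assoc _ (1 - q) q, hq', ← mul_assoc p,
    ← mul_assoc p, ← mul_assoc p, ← mul_assoc p, hp.eq, hp', zero_mul, zero_mul, mul_zero]

theorem IsIdempotentElem.intertwiner_eq_of_mul_eq (hq : IsIdempotentElem q) {g : R}
    (h : p * g = g * q) :
    p * g * q + (1 - p) * g * (1 - q) = g := by
  have h' : (1 - p) * g = g * (1 - q) := by rw [sub_mul, mul_sub, h, one_mul, mul_one]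
  rw [h, h', mul_assoc, mul_assoc, hq.eq, hq.one_sub.eq, ← mul_add, add_sub_cancel, mul_one]

end Ring

section Projection

variable {K V : Type*} [DivisionRing K] [AddCommGroup V] [Module K V] [FiniteDimensional K V]
  {f : Module.End K V}

theorem LinearMap.IsIdempotentElem.exists_basis_sum_apply (hf : IsIdempotentElem f) :
    ∃ (d e : ℕ) (b : Module.Basis (Fin d ⊕ Fin e) K V),
      (∀ i, f (b (.inl i)) = b (.inl i)) ∧ ∀ i, f (b (.inr i)) = 0 := by
  let b := ((Module.finBasis K (LinearMap.range f)).prod (Module.finBasis K (LinearMap.ker f))).map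
    (Submodule.prodEquivOfIsCompl _ _ (LinearMap.IsIdempotentElem.isCompl hf))
  refine ⟨_, _, b, fun i => ?_, fun i => ?_⟩
  · simpa [b] using (LinearMap.IsIdempotentElem.mem_range_iff hf).mp (Module.finBasis K _ i).2
  · simp [b]

theorem LinearMap.IsIdempotentElem.exists_basis_apply_eq_ite {n : ℕ} (hf : IsIdempotentElem f)
    (hn : Module.finrank K V = n) :
    ∃ d ≤ n, ∃ b : Module.Basis (Fin n) K V,
      ∀ j, f (b j) = if (j : ℕ) < d then b j else 0 := by
  obtain ⟨d, e, b, hl, hr⟩ := exists_basis_sum_apply hf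
  obtain rfl : n = d + e := by simp [← hn, Module.finrank_eq_card_basis b]
  refine ⟨d, by omega, b.reindex finSumFinEquiv, Fin.addCases (fun i => ?_) (fun i => ?_)⟩
  · simp [hl]
  · simp [hr]

end Projection

theorem Matrix.exists_isUnit_mul_eq_diagonal_of_isIdempotentElem {K : Type*} [Field K] {n : ℕ}
    {A : Matrix (Fin n) (Fin n) K} (hA : IsIdempotentElem A) :
    ∃ d ≤ n, ∃ C : Matrix (Fin n) (Fin n) K, IsUnit C ∧
      A * C = C * diagonal fun i : Fin n => if (i : ℕ) < d then 1 else 0 := by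
  have hf : IsIdempotentElem (toLin' A) := by
    rw [IsIdempotentElem, Module.End.mul_eq_comp, ← toLin'_mul, hA.eq]
  obtain ⟨d, hd, b, hb⟩ :=
    LinearMap.IsIdempotentElem.exists_basis_apply_eq_ite hf (Module.finrank_fin_fun K)
  let C := (Pi.basisFun K (Fin n)).toMatrix b
  have : Invertible C := (Pi.basisFun K (Fin n)).invertibleToMatrix b
  refine ⟨d, hd, C, isUnit_of_invertible C, ?_⟩
  ext i j
  have hj := congrFun (hb j) i
  rw [toLin'_apply] at hj
  have hC : ∀ x, C x j = b j x := fun x => by simp [C, Module.Basis.toMatrix_apply]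
  rw [mul_diagonal, hC]
  calc (A * C) i j = (A *ᵥ b j) i := by simp [mul_apply, mulVec, dotProduct, hC]
    _ = _ := by rw [hj]; split_ifs <;> simp

namespace Matrix.BlockTriangular

variable {α : Type*} [LinearOrder α] [Fintype α] {β : α → Type*} [∀ a, Fintype (β a)]
  {R : Type*}

theorem blockDiag'_mul [NonUnitalNonAssocSemiring R] {M N : Matrix (Σ a, β a) (Σ a, β a) R}
    (hM : M.BlockTriangular Sigma.fst) (hN : N.BlockTriangular Sigma.fst) :
    blockDiag' (M * N) = blockDiag' M * blockDiag' N := by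
  ext a i j
  rw [blockDiag'_apply, mul_apply, Fintype.sum_sigma, Finset.sum_eq_single a]
  · rfl
  · intro c _ hc
    refine Finset.sum_eq_zero fun x _ => ?_
    rcases hc.lt_or_gt with h | h
    · rw [hM h, zero_mul]
    · rw [hN h, mul_zero]
  · simp

theorem isIdempotentElem_blockDiag' [NonUnitalNonAssocSemiring R]
    {M : Matrix (Σ a, β a) (Σ a, β a) R} (hM : M.BlockTriangular Sigma.fst)
    (hM' : IsIdempotentElem M) : IsIdempotentElem (blockDiag' M) := by
  rw [IsIdempotentElem, ← hM.blockDiag'_mul hM, hM'.eq]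

theorem det_eq_prod_det_blockDiag' [CommRing R] [DecidableEq α] [∀ a, DecidableEq (β a)]
    {M : Matrix (Σ a, β a) (Σ a, β a) R} (hM : M.BlockTriangular Sigma.fst) :
    M.det = ∏ a, (blockDiag' M a).det := by
  rw [hM.det_fintype]
  refine Fintype.prod_congr _ _ fun a => ?_
  have : M.toSquareBlock Sigma.fst a =
      (blockDiag' M a).submatrix (Equiv.sigmaSubtype a) (Equiv.sigmaSubtype a) := by
    ext ⟨⟨_, i⟩, rfl⟩ ⟨⟨_, j⟩, hj⟩
    cases hj
    rfl
  rw [this, det_submatrix_equiv_self]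

theorem exists_isUnit_mul_eq_mul_of_isIdempotentElem [CommRing R] [DecidableEq α]
    [∀ a, DecidableEq (β a)] {p q : Matrix (Σ a, β a) (Σ a, β a) R}
    (hp : IsIdempotentElem p) (hq : IsIdempotentElem q)
    (hpT : p.BlockTriangular Sigma.fst) (hqT : q.BlockTriangular Sigma.fst)
    (C : ∀ a, Matrix (β a) (β a) R) (hC : ∀ a, IsUnit (C a))
    (hpC : ∀ a, blockDiag' p a * C a = C a * blockDiag' q a) :
    ∃ u : Matrix (Σ a, β a) (Σ a, β a) R,
      IsUnit u ∧ u.BlockTriangular Sigma.fst ∧ p * u = u * q := by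
  set g := blockDiagonal' C
  have hgT : g.BlockTriangular Sigma.fst := blockTriangular_blockDiagonal' C
  have h1T : (1 : Matrix (Σ a, β a) (Σ a, β a) R).BlockTriangular Sigma.fst :=
    blockTriangular_one
  have hpT' := h1T.sub hpT
  have hqT' := h1T.sub hqT
  set u := p * g * q + (1 - p) * g * (1 - q)
  have huT : u.BlockTriangular Sigma.fst :=
    ((hpT.mul hgT).mul hqT).add ((hpT'.mul hgT).mul hqT')
  have hu : blockDiag' u = C := by
    rw [blockDiag'_add, (hpT.mul hgT).blockDiag'_mul hqT, hpT.blockDiag'_mul hgT,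
      (hpT'.mul hgT).blockDiag'_mul hqT', hpT'.blockDiag'_mul hgT, blockDiag'_sub,
      blockDiag'_sub, blockDiag'_one, blockDiag'_blockDiagonal']
    exact (hqT.isIdempotentElem_blockDiag' hq).intertwiner_eq_of_mul_eq (funext hpC)
  refine ⟨u, ?_, huT, hp.mul_intertwiner hq g⟩
  rw [isUnit_iff_isUnit_det, huT.det_eq_prod_det_blockDiag', hu, IsUnit.prod_univ_iff]
  exact fun a => (isUnit_iff_isUnit_det _).mp (hC a)

end Matrix.BlockTriangular

theorem stmt14_general {k : Type*} [Field k] (t : ℕ) (nn : Fin t → ℕ)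
    (φ : Matrix ((i : Fin t) × Fin (nn i)) ((i : Fin t) × Fin (nn i)) k)
    (hidem : φ * φ = φ)
    (hupper : ∀ x y : (i : Fin t) × Fin (nn i), y.1 < x.1 → φ x y = 0) :
    ∃ χ : Matrix ((i : Fin t) × Fin (nn i)) ((i : Fin t) × Fin (nn i)) k,
      IsUnit χ ∧ (∀ x y : (i : Fin t) × Fin (nn i), y.1 < x.1 → χ x y = 0) ∧
      ∃ d : Fin t → ℕ, (∀ l, d l ≤ nn l) ∧
        χ⁻¹ * φ * χ = Matrix.of (fun x y : (i : Fin t) × Fin (nn i) =>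
          if x = y ∧ (x.2 : ℕ) < d x.1 then 1 else 0) := by
  have hφT : φ.BlockTriangular Sigma.fst := hupper
  choose d hd C hC hAC using fun l => exists_isUnit_mul_eq_diagonal_of_isIdempotentElem
    (congrFun (hφT.isIdempotentElem_blockDiag' hidem) l)
  set e := diagonal fun x : (i : Fin t) × Fin (nn i) => if (x.2 : ℕ) < d x.1 then (1 : k) else 0
  have he : IsIdempotentElem e := by
    rw [IsIdempotentElem, diagonal_mul_diagonal]
    congr 1; funext x; split_ifs <;> simp
  obtain ⟨χ, hχ, hχT, hφχ⟩ := hφT.exists_isUnit_mul_eq_mul_of_isIdempotentElem hidem he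
    (blockTriangular_diagonal _) C hC (by simpa [e] using hAC)
  refine ⟨χ, hχ, hχT, d, hd, ?_⟩
  rw [mul_assoc, hφχ, nonsing_inv_mul_cancel_left (A := χ) e ((isUnit_iff_isUnit_det _).mp hχ)]
  ext x y
  by_cases hxy : x = y
  · subst hxy; simp [e]
  · simp [e, hxy]

/-- **Lemma 3.5.1.** Every block upper triangular idempotent matrix `φ` over an
algebraically closed field (with respect to a partition into `t` blocks of sizes
`nn i`) is conjugate, by an invertible block upper triangular matrix `χ` with
the same partition, to a block diagonal idempotent whose `l`-th diagonal block
is `diag(I_{d l}, 0)` for some `0 ≤ d l ≤ nn l`. -/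
theorem stmt14 {k : Type*} [Field k] [IsAlgClosed k] (t : ℕ) (nn : Fin t → ℕ)
    (φ : Matrix ((i : Fin t) × Fin (nn i)) ((i : Fin t) × Fin (nn i)) k)
    (hidem : φ * φ = φ)
    (hupper : ∀ x y : (i : Fin t) × Fin (nn i), y.1 < x.1 → φ x y = 0) :
    ∃ χ : Matrix ((i : Fin t) × Fin (nn i)) ((i : Fin t) × Fin (nn i)) k,
      IsUnit χ ∧ (∀ x y : (i : Fin t) × Fin (nn i), y.1 < x.1 → χ x y = 0) ∧
      ∃ d : Fin t → ℕ, (∀ l, d l ≤ nn l) ∧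
        χ⁻¹ * φ * χ = Matrix.of (fun x y : (i : Fin t) × Fin (nn i) =>
          if x = y ∧ (x.2 : ℕ) < d x.1 then 1 else 0) :=
  stmt14_general t nn φ hidem hupper
end

section
/- Let $(\mathcal{K},\mathcal{M},H)$ be as above and suppose idempotents split in $\mathcal{K}$. If $\varphi: M \to M$ is an idempotent endomorphism in the category $\mathrm{Mat}(\mathcal{K},\mathcal{M})$ (i.e. $\varphi \in \mathcal{K}$, $M\varphi - \varphi M = d(\varphi)$, $\varphi^2 = \varphi$), and $\varphi = \pi\iota$ with $\iota\pi = \mathrm{id}$ for matrices $\pi, \iota$ over $\mathcal{K}$, then setting $L = \iota M \pi - \iota\, d(\pi)$, both $\pi: M \to L$ and $\iota: L \to M$ are morphisms in $\mathrm{Mat}(\mathcal{K},\mathcal{M})$; hence the idempotent $\varphi$ splits and $\mathrm{Mat}(\mathcal{K},\mathcal{M})$ is Krull-Schmidt. -/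
/-!
Since `M S - S N = S H' - H S` is equivalent to `(M + H) S = S (N + H')`, a morphism
`S : M → N` of `Mat(𝒦, ℳ)` is a matrix intertwining `M + H` and `N + H'`. So `φ` is a
retract `π ι` that commutes with `A = M + H`, and `L + H'` is the corner `ι A π`. Both
intertwining relations `A π = π (ι A π)` and `(ι A π) ι = ι A` then follow by moving `A`
across `φ = π ι` and cancelling `ι π = 1`.
-/

theorem commute_add_of_mul_sub_mul_eq {R : Type*} [Ring R] {a h x : R}
    (hx : a * x - x * a = x * h - h * x) : Commute (a + h) x := by
  rw [Commute, SemiconjBy, add_mul, mul_add]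
  rw [sub_eq_sub_iff_add_eq_add] at hx
  rw [hx, add_comm]

namespace Matrix

variable {m n R : Type*} [Fintype m] [Fintype n] [DecidableEq n]

section Semiring

variable [Semiring R] {A : Matrix m m R} {π : Matrix m n R} {ι : Matrix n m R}

theorem mul_eq_mul_corner_of_commute (hιπ : ι * π = 1) (hA : Commute A (π * ι)) :
    A * π = π * (ι * A * π) :=
  calc A * π = A * (π * ι) * π := by rw [Matrix.mul_assoc, Matrix.mul_assoc, hιπ, Matrix.mul_one]
    _ = π * (ι * A * π) := by rw [hA.eq, Matrix.mul_assoc, Matrix.mul_assoc, Matrix.mul_assoc]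

theorem corner_mul_eq_of_commute (hιπ : ι * π = 1) (hA : Commute A (π * ι)) :
    ι * A * π * ι = ι * A :=
  calc ι * A * π * ι = ι * (π * ι * A) := by rw [← hA.eq, Matrix.mul_assoc, Matrix.mul_assoc]
    _ = ι * A := by rw [← Matrix.mul_assoc, ← Matrix.mul_assoc, hιπ, Matrix.one_mul]

end Semiring

theorem corner_sub_add_eq_corner_add [Ring R] {Ha M : Matrix m m R} {Hb : Matrix n n R}
    {π : Matrix m n R} {ι : Matrix n m R} (hιπ : ι * π = 1) :
    ι * M * π - ι * (π * Hb - Ha * π) + Hb = ι * (M + Ha) * π := by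
  rw [Matrix.mul_sub, ← Matrix.mul_assoc, hιπ, Matrix.one_mul, Matrix.mul_add, Matrix.add_mul,
    ← Matrix.mul_assoc]
  abel

end Matrix

theorem stmt19_general {k : Type*} [Field k] (a b : ℕ)
    (Ha : Matrix (Fin a) (Fin a) k) (Hb : Matrix (Fin b) (Fin b) k)
    (M φ : Matrix (Fin a) (Fin a) k)
    (π : Matrix (Fin a) (Fin b) k) (ι : Matrix (Fin b) (Fin a) k)
    (hφ : φ = π * ι) (hιπ : ι * π = 1)
    (hmor : M * φ - φ * M = φ * Ha - Ha * φ) :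
    (M + Ha) * π = π * ((ι * M * π - ι * (π * Hb - Ha * π)) + Hb) ∧
    ((ι * M * π - ι * (π * Hb - Ha * π)) + Hb) * ι = ι * (M + Ha) := by
  subst hφ
  have hA : Commute (M + Ha) (π * ι) := commute_add_of_mul_sub_mul_eq hmor
  rw [Matrix.corner_sub_add_eq_corner_add hιπ]
  exact ⟨Matrix.mul_eq_mul_corner_of_commute hιπ hA, Matrix.corner_mul_eq_of_commute hιπ hA⟩

/-- **(Proposition 3.5.1, splitting of idempotents).** Let `φ : M → M` be an
idempotent endomorphism in `Mat(𝒦, ℳ)` (so `M φ - φ M = d(φ) = φ H - H φ`),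
and suppose `φ = π ι` with `ι π = 1` (with `π`, `ι` possibly rectangular, and
`d(X) = X H' - H X` on rectangular matrices). Setting
`L = ι M π - ι d(π)`, both `π : M → L` and `ι : L → M` are morphisms in
`Mat(𝒦, ℳ)`, i.e. `(M + H) π = π (L + H')` and `(L + H') ι = ι (M + H)`; hence
the idempotent `φ` splits. -/
theorem stmt19 {k : Type*} [Field k] (a b : ℕ)
    (Ha : Matrix (Fin a) (Fin a) k) (Hb : Matrix (Fin b) (Fin b) k)
    (M φ : Matrix (Fin a) (Fin a) k)
    (π : Matrix (Fin a) (Fin b) k) (ι : Matrix (Fin b) (Fin a) k)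
    (hφ : φ = π * ι) (hιπ : ι * π = 1)
    (hidem : φ * φ = φ)
    (hmor : M * φ - φ * M = φ * Ha - Ha * φ) :
    (M + Ha) * π = π * ((ι * M * π - ι * (π * Hb - Ha * π)) + Hb) ∧
    ((ι * M * π - ι * (π * Hb - Ha * π)) + Hb) * ι = ι * (M + Ha) :=
  stmt19_general a b Ha Hb M φ π ι hφ hιπ hmor
end
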